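/- Let 𝔸 be a commutative Banach algebra over ℝ with unit 1, let A ∈ 𝔸 be a fixed element, and define τ : ℝ² → 𝔸 by τ(x, t) = 1 + exp(2Ax + 2A³t), where exp is the exponential in 𝔸. Assume τ(x, t) is invertible in 𝔸 for every (x, t). Then U := ∂_x( (∂_x τ) ∘ τ^{-1} ) satisfies the 𝔸-valued KdV equation 4 U_t − 12 U ∘ U_x − U_{xxx} = 0. -/

import Mathlib

/-
Put `e = exp (2Ax + 2A³t)` and `g = e (1 + e)⁻¹`, so that `τ = 1 + e`. Because `𝔸` is commutative,
every directional derivative of `g` is a multiple of `g - g²`: `∂ₓ g = 2A (g - g²)` and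
`∂ₜ g = 2A³ (g - g²)`. Hence on functions of the form `P(g)` with `P ∈ 𝔸[X]`, the operators `∂ₓ`
and `∂ₜ` act as the derivations `P ↦ P' · b (X - X²)` of `𝔸[X]` with `b = 2A`, resp. `2A³`.
Since `(∂ₓ τ) τ⁻¹ = 2A g`, all of `U`, `Uₓ`, `Uₓₓₓ`, `Uₜ` are polynomials in `g`, and the KdV
equation becomes an identity in `𝔸[X]`.
-/

/-- Partial derivative in the `x`-direction of a function of `(x, t) : ℝ × ℝ`. -/
noncomputable def pdX {A : Type*} [NormedAddCommGroup A] [NormedSpace ℝ A]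
    (f : ℝ × ℝ → A) : ℝ × ℝ → A :=
  fun p => lineDeriv ℝ f p (1, 0)

/-- Partial derivative in the `t`-direction. -/
noncomputable def pdT {A : Type*} [NormedAddCommGroup A] [NormedSpace ℝ A]
    (f : ℝ × ℝ → A) : ℝ × ℝ → A :=
  fun p => lineDeriv ℝ f p (0, 1)

open Polynomial

section LineDeriv

variable {𝕜 𝔸 : Type*} [NontriviallyNormedField 𝕜] [NormedCommRing 𝔸] [NormedAlgebra 𝕜 𝔸]

theorem HasDerivAt.polynomial_eval {f : 𝕜 → 𝔸} {f' : 𝔸} {x : 𝕜} (P : 𝔸[X])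
    (h : HasDerivAt f f' x) :
    HasDerivAt (fun y => P.eval (f y)) (P.derivative.eval (f x) * f') x := by
  induction P using Polynomial.induction_on' with
  | add P Q hP hQ => simpa [add_mul] using hP.fun_add hQ
  | monomial n a => simpa [derivative_monomial, mul_assoc] using (h.fun_pow n).const_mul a

variable {E : Type*} [NormedAddCommGroup E] [NormedSpace 𝕜 E] {x v : E}

theorem HasLineDerivAt.polynomial_eval {f : E → 𝔸} {f' : 𝔸} (P : 𝔸[X])
    (h : HasLineDerivAt 𝕜 f f' x v) :
    HasLineDerivAt 𝕜 (fun y => P.eval (f y)) (P.derivative.eval (f x) * f') x v := by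
  simpa [HasLineDerivAt] using HasDerivAt.polynomial_eval P h

noncomputable def logistic (a : 𝔸) : 𝔸 := a * Ring.inverse (1 + a)

theorem HasLineDerivAt.logistic [CompleteSpace 𝔸] {e : E → 𝔸} {b : 𝔸}
    (he : HasLineDerivAt 𝕜 e (b * e x) x v) (hu : IsUnit (1 + e x)) :
    HasLineDerivAt 𝕜 (fun y => logistic (e y))
      (b * (logistic (e x) - logistic (e x) ^ 2)) x v := by
  have hτ : HasDerivAt (fun s : 𝕜 => 1 + e (x + s • v)) (b * e x) 0 := he.const_add 1
  have hinv : HasDerivAt (fun s : 𝕜 => Ring.inverse (1 + e (x + s • v)))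
      (-(Ring.inverse (1 + e x) * (b * e x) * Ring.inverse (1 + e x))) 0 := by
    obtain ⟨u, hu⟩ := hu
    have := (hasFDerivAt_ringInverse (𝕜 := 𝕜) u).comp_hasDerivAt_of_eq 0 hτ (by simp [hu])
    simpa [← Ring.inverse_unit, hu, Function.comp_def] using this
  refine (he.mul hinv).congr_deriv ?_
  simp only [zero_smul, add_zero, _root_.logistic]
  ring

end LineDeriv

section Exp

variable {𝕂 𝔸 E : Type*} [RCLike 𝕂] [NormedCommRing 𝔸] [NormedAlgebra 𝕂 𝔸] [CompleteSpace 𝔸]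
  [NormedAddCommGroup E] [NormedSpace 𝕂 E]

theorem HasLineDerivAt.normedSpace_exp {f : E → 𝔸} {f' : 𝔸} {x v : E}
    (h : HasLineDerivAt 𝕂 f f' x v) :
    HasLineDerivAt 𝕂 (fun y => NormedSpace.exp (f y)) (f' * NormedSpace.exp (f x)) x v := by
  have := (hasFDerivAt_exp (𝕂 := 𝕂) (x := f x)).comp_hasDerivAt_of_eq 0 h (by simp)
  simpa [HasLineDerivAt, mul_comm, Function.comp_def] using this

end Exp

section LogisticDeriv

variable {R : Type*} [CommRing R]

noncomputable def logisticDeriv (b : R) (P : R[X]) : R[X] := derivative P * (C b * (X - X ^ 2))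

theorem kdv_identity_logisticDeriv (a : R) :
    4 * logisticDeriv (2 * a ^ 3) (logisticDeriv (2 * a) (C (2 * a) * X)) -
      12 * (logisticDeriv (2 * a) (C (2 * a) * X) *
        logisticDeriv (2 * a) (logisticDeriv (2 * a) (C (2 * a) * X))) -
      logisticDeriv (2 * a) (logisticDeriv (2 * a) (logisticDeriv (2 * a)
        (logisticDeriv (2 * a) (C (2 * a) * X)))) = 0 := by
  simp only [logisticDeriv, map_mul, C_ofNat, derivative_mul, derivative_ofNat, zero_mul,
    derivative_C, mul_zero, add_zero, derivative_X, mul_one, zero_add, derivative_sub,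
    derivative_X_pow_succ, Nat.cast_one, map_add, map_one, pow_one, map_pow, derivative_one,
    zero_sub, neg_add_rev, derivative_neg, neg_zero]
  ring

variable {𝕜 : Type*} [NontriviallyNormedField 𝕜] {𝔸 E : Type*} [NormedCommRing 𝔸]
  [NormedAlgebra 𝕜 𝔸] [NormedAddCommGroup E] [NormedSpace 𝕜 E]

theorem lineDeriv_polynomial_eval_eq_logisticDeriv {g : E → 𝔸} {b : 𝔸} {v : E}
    (hg : ∀ y, HasLineDerivAt 𝕜 g (b * (g y - g y ^ 2)) y v) (P : 𝔸[X]) :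
    (fun y => lineDeriv 𝕜 (fun z => P.eval (g z)) y v) =
      fun y => (logisticDeriv b P).eval (g y) := by
  funext y
  rw [((hg y).polynomial_eval P).lineDeriv, logisticDeriv]
  simp

end LogisticDeriv

section KdV

variable {𝔸 : Type*} [NormedCommRing 𝔸] [NormedAlgebra ℝ 𝔸]

noncomputable def kdvPhase (A : 𝔸) : ℝ × ℝ →L[ℝ] 𝔸 :=
  (2 : ℝ) • ((ContinuousLinearMap.fst ℝ ℝ ℝ).smulRight A +
    (ContinuousLinearMap.snd ℝ ℝ ℝ).smulRight (A ^ 3))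

theorem kdvPhase_apply (A : 𝔸) (p : ℝ × ℝ) :
    kdvPhase A p = (2 * p.1) • A + (2 * p.2) • A ^ 3 := by
  simp [kdvPhase, smul_smul]

theorem kdvPhase_one_zero (A : 𝔸) : kdvPhase A (1, 0) = 2 * A := by
  simp [kdvPhase_apply, two_smul, two_mul]

theorem kdvPhase_zero_one (A : 𝔸) : kdvPhase A (0, 1) = 2 * A ^ 3 := by
  simp [kdvPhase_apply, two_smul, two_mul]

end KdV

/-- in a commutative Banach ℝ-algebra 𝔸 with unit, for a fixed `A ∈ 𝔸`,
set `τ(x,t) = 1 + exp(2Ax + 2A³t)`.  If `τ(x,t)` is invertible for every `(x,t)`, then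
`U := ∂_x((∂_x τ) ∘ τ⁻¹)` satisfies the 𝔸-valued KdV equation
`4U_t − 12 U ∘ U_x − U_{xxx} = 0`. -/
theorem stmt3 {𝔸 : Type*} [NormedCommRing 𝔸] [NormedAlgebra ℝ 𝔸] [CompleteSpace 𝔸]
    (A : 𝔸)
    (τ : ℝ × ℝ → 𝔸)
    (hτ : τ = fun p => 1 + NormedSpace.exp ((2 * p.1) • A + (2 * p.2) • A ^ 3))
    (hinv : ∀ p, IsUnit (τ p))
    (U : ℝ × ℝ → 𝔸)
    (hU : U = pdX fun p => pdX τ p * Ring.inverse (τ p)) :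
    ∀ p, 4 * pdT U p - 12 * (U p * pdX U p) - pdX (pdX (pdX U)) p = 0 := by
  set e : ℝ × ℝ → 𝔸 := fun q => NormedSpace.exp (kdvPhase A q)
  set g : ℝ × ℝ → 𝔸 := fun q => logistic (e q)
  have hτe : τ = fun q => 1 + e q := by simp only [hτ, e, kdvPhase_apply]
  have he q v : HasLineDerivAt ℝ e (kdvPhase A v * e q) q v :=
    ((kdvPhase A).hasFDerivAt.hasLineDerivAt v).normedSpace_exp
  have hg q v : HasLineDerivAt ℝ g (kdvPhase A v * (g q - g q ^ 2)) q v :=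
    (he q v).logistic (by simpa only [hτe] using hinv q)
  have hX (P : 𝔸[X]) :
      pdX (fun q => P.eval (g q)) = fun q => (logisticDeriv (2 * A) P).eval (g q) := by
    unfold pdX
    simpa only [kdvPhase_one_zero] using
      lineDeriv_polynomial_eval_eq_logisticDeriv (hg · (1, 0)) P
  have hT (P : 𝔸[X]) :
      pdT (fun q => P.eval (g q)) = fun q => (logisticDeriv (2 * A ^ 3) P).eval (g q) := by
    unfold pdT
    simpa only [kdvPhase_zero_one] using
      lineDeriv_polynomial_eval_eq_logisticDeriv (hg · (0, 1)) P
  have hlogDeriv :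
      (fun q => pdX τ q * Ring.inverse (τ q)) = fun q => (C (2 * A) * X).eval (g q) := by
    funext q
    have hτ_x : pdX τ q = 2 * A * e q := by
      rw [hτe, ← kdvPhase_one_zero]
      exact HasLineDerivAt.lineDeriv (f := fun q => 1 + e q) ((he q (1, 0)).const_add 1)
    rw [hτ_x, hτe]
    simp only [eval_mul, eval_C, eval_X, g, logistic, mul_assoc]
  intro p
  rw [hU, hlogDeriv, hX, hX, hX, hX, hT]
  simpa only [eval_sub, eval_mul, eval_ofNat, eval_zero] using
    congrArg (eval (g p)) (kdv_identity_logisticDeriv A)
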